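/- (Conditional-probability well-definedness) If Φ_i^v(E') = Φ_i^v(F') for E', F' ⊆ E_{<i}, then Pr[S⇝v | E' present, E_{<i}\E' absent] = Pr[S⇝v | F' present, E_{<i}\F' absent]. -/

import Mathlib

open scoped Classical
open Finset

noncomputable section

/-- `inc src tgt e x` : edge `e` is incident to vertex `x`. -/
def inc {V : Type*} (src tgt : ℕ → V) (e : ℕ) (x : V) : Prop := src e = x ∨ tgt e = x

/-- Reachability in the subgraph with edge set `A`. -/
def Reach {V : Type*} (src tgt : ℕ → V) (A : Finset ℕ) (x y : V) : Prop :=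
  Relation.ReflTransGen (fun a b => ∃ e ∈ A, src e = a ∧ tgt e = b) x y

/-- `v` is reachable from some vertex of `S` in the subgraph with edge set `A`. -/
def SReach {V : Type*} (src tgt : ℕ → V) (A : Finset ℕ) (S : Finset V) (v : V) : Prop :=
  ∃ s ∈ S, Reach src tgt A s v

/-- Probability that exactly the edges in `X` (among `e_0,…,e_{m-1}`) are present. -/
def prW (p : ℕ → ℝ) (m : ℕ) (X : Finset ℕ) : ℝ :=
  (∏ e ∈ X, p e) * ∏ e ∈ Finset.range m \ X, (1 - p e)

/-- Probability that `v` is reachable from the seed set `S`. -/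
def probReach {V : Type*} (src tgt : ℕ → V) (p : ℕ → ℝ) (m : ℕ) (S : Finset V) (v : V) : ℝ :=
  ∑ X ∈ (Finset.range m).powerset, if SReach src tgt X S v then prW p m X else 0

/-- Conditional probability of `event` given that all edges in `A` are present and
all edges in `B` are absent. -/
def condP (p : ℕ → ℝ) (m : ℕ) (A B : Finset ℕ) (event : Finset ℕ → Prop) : ℝ :=
  (∑ X ∈ (Finset.range m).powerset,
      if A ⊆ X ∧ X ∩ B = ∅ ∧ event X then prW p m X else 0) /
  (∑ X ∈ (Finset.range m).powerset, if A ⊆ X ∧ X ∩ B = ∅ then prW p m X else 0)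

/-- The frontier `W_i`: vertices incident both to an edge of `E_{<i}` and to an edge of
`E_{≥ i}` (as a set). -/
def frontSet {V : Type*} (src tgt : ℕ → V) (m i : ℕ) : Set V :=
  {x | (∃ e ∈ Finset.range i, inc src tgt e x) ∧
       ∃ e ∈ Finset.range m \ Finset.range i, inc src tgt e x}

/-- The frontier `W_i` as a finset. -/
def front {V : Type*} [Fintype V] (src tgt : ℕ → V) (m i : ℕ) : Finset V :=
  Finset.univ.filter fun x =>
    (∃ e ∈ Finset.range i, inc src tgt e x) ∧
    ∃ e ∈ Finset.range m \ Finset.range i, inc src tgt e x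

/-- The shared transversal configuration `Ψ_i(A)`: the set of frontier vertices reachable
from `S`, together with the reachability relation among unreached frontier vertices. -/
def Psi {V : Type*} [Fintype V] (src tgt : ℕ → V) (m : ℕ) (S : Finset V) (i : ℕ)
    (A : Finset ℕ) : Finset V × Finset (V × V) :=
  ((front src tgt m i).filter fun x => SReach src tgt A S x,
   ((front src tgt m i) ×ˢ (front src tgt m i)).filter fun q =>
     ¬ SReach src tgt A S q.1 ∧ Reach src tgt A q.1 q.2)

/-- The transversal configuration `Φ_i^v(A)`: the sets `W_i^{S⇝}`, `W_i^{⇝v}`, the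
reachability matrix on the remaining rows/columns (with extra column `v`), and the
entry `Φ_{S,v}`. -/
def Phi {V : Type*} [Fintype V] (src tgt : ℕ → V) (m : ℕ) (S : Finset V) (i : ℕ) (v : V)
    (A : Finset ℕ) : Finset V × Finset V × Finset (V × V) × Prop :=
  ((front src tgt m i).filter fun x => SReach src tgt A S x,
   (front src tgt m i).filter fun x => Reach src tgt A x v,
   (((front src tgt m i) ∪ {v}) ×ˢ ((front src tgt m i) ∪ {v})).filter fun q =>
     (q.1 ∈ front src tgt m i ∧ ¬ SReach src tgt A S q.1) ∧
     (q.2 = v ∨ (q.2 ∈ front src tgt m i ∧ ¬ Reach src tgt A q.2 v)) ∧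
     Reach src tgt A q.1 q.2,
   SReach src tgt A S v)

/-- Probability that the shared transversal configuration `Ψ` appears at level `i`. -/
def PrPsi {V : Type*} [Fintype V] (src tgt : ℕ → V) (p : ℕ → ℝ) (m : ℕ) (S : Finset V)
    (i : ℕ) (Ψ : Finset V × Finset (V × V)) : ℝ :=
  ∑ A ∈ (Finset.range i).powerset,
    if Psi src tgt m S i A = Ψ then
      (∏ e ∈ A, p e) * ∏ e ∈ Finset.range i \ A, (1 - p e)
    else 0

/-- `IsWalk src tgt A x y es`: `es` is a directed walk from `x` to `y` using edges in `A`. -/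
def IsWalk {V : Type*} (src tgt : ℕ → V) (A : Finset ℕ) : V → V → List ℕ → Prop
  | x, y, [] => x = y
  | x, y, e :: es => e ∈ A ∧ src e = x ∧ IsWalk src tgt A (tgt e) y es

/-!
Conditioning on the status of the edges of `E_{<i}` turns the conditional probability into the
probability, over the independent edges `Y ⊆ E_{≥i}`, that `S` reaches `v` in `E' ∪ Y`. So it
suffices that `S ⇝ v` in `E' ∪ Y` implies `S ⇝ v` in `F' ∪ Y`. A walk in `E' ∪ Y` alternates
between `E'`-segments and `Y`-segments, and switches only at frontier vertices. Take an
`E'`-segment from `a` to `z`, where `a` is a seed or a frontier vertex already reached in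
`F' ∪ Y`, and `z` is a frontier vertex or `v`. If `S ⇝ a` in `E'`, then `S ⇝ z` in `E'`, which `Φ`
transfers to `F'`. Otherwise `a` indexes a row of `Φ`, and either `z ⇝ v` in `E'` (so `a ⇝ v`
in `F'`, via `W^{⇝v}`) or `z` indexes a column and the entry `(a, z)` gives `a ⇝ z` in `F'`.
-/

section Reachability
variable {V : Type*} {src tgt : ℕ → V} {A B : Finset ℕ} {S : Finset V} {x y : V}

lemma Reach.mono (hAB : A ⊆ B) (h : Reach src tgt A x y) : Reach src tgt B x y :=
  Relation.ReflTransGen.mono (fun _ _ ⟨e, he, hs, ht⟩ => ⟨e, hAB he, hs, ht⟩) _ _ h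

lemma reach_edge {e : ℕ} (he : e ∈ A) : Reach src tgt A (src e) (tgt e) :=
  Relation.ReflTransGen.single ⟨e, he, rfl, rfl⟩

lemma sReach_of_mem (hx : x ∈ S) : SReach src tgt A S x :=
  ⟨x, hx, Relation.ReflTransGen.refl⟩

lemma SReach.trans (h : SReach src tgt A S x) (hxy : Reach src tgt A x y) :
    SReach src tgt A S y :=
  let ⟨s, hs, hsx⟩ := h
  ⟨s, hs, hsx.trans hxy⟩

lemma SReach.mono (hAB : A ⊆ B) (h : SReach src tgt A S x) : SReach src tgt B S x :=
  let ⟨s, hs, hsx⟩ := h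
  ⟨s, hs, hsx.mono hAB⟩

end Reachability

section Configuration
variable {V : Type*} [Fintype V] {src tgt : ℕ → V} {m i : ℕ} {S : Finset V} {v x y : V}
  {E F : Finset ℕ}

lemma mem_front :
    x ∈ front src tgt m i ↔ (∃ e ∈ range i, inc src tgt e x) ∧
      ∃ e ∈ range m \ range i, inc src tgt e x := by
  simp [front]

lemma sReach_of_phi_eq (hPhi : Phi src tgt m S i v E = Phi src tgt m S i v F)
    (hx : x ∈ front src tgt m i) (h : SReach src tgt E S x) : SReach src tgt F S x := by
  have hmem : x ∈ (Phi src tgt m S i v E).1 := mem_filter.2 ⟨hx, h⟩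
  rw [hPhi] at hmem
  exact (mem_filter.1 hmem).2

lemma reach_target_of_phi_eq (hPhi : Phi src tgt m S i v E = Phi src tgt m S i v F)
    (hx : x ∈ front src tgt m i) (h : Reach src tgt E x v) : Reach src tgt F x v := by
  have hmem : x ∈ (Phi src tgt m S i v E).2.1 := mem_filter.2 ⟨hx, h⟩
  rw [hPhi] at hmem
  exact (mem_filter.1 hmem).2

lemma reach_of_phi_eq (hPhi : Phi src tgt m S i v E = Phi src tgt m S i v F)
    (hx : x ∈ front src tgt m i) (hxS : ¬ SReach src tgt E S x)
    (hy : y = v ∨ y ∈ front src tgt m i ∧ ¬ Reach src tgt E y v) (h : Reach src tgt E x y) :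
    Reach src tgt F x y := by
  have hy' : y ∈ front src tgt m i ∪ {v} := by
    rcases hy with rfl | ⟨hy, -⟩ <;> simp [*]
  have hmem : (x, y) ∈ (Phi src tgt m S i v E).2.2.1 :=
    mem_filter.2 ⟨mem_product.2 ⟨mem_union_left _ hx, hy'⟩, ⟨hx, hxS⟩, hy, h⟩
  rw [hPhi] at hmem
  exact (mem_filter.1 hmem).2.2.2

lemma sReach_target_of_phi_eq (hPhi : Phi src tgt m S i v E = Phi src tgt m S i v F)
    (h : SReach src tgt E S v) : SReach src tgt F S v := by
  have hv : SReach src tgt E S v = SReach src tgt F S v := congrArg (·.2.2.2) hPhi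
  exact hv ▸ h

end Configuration

section Transfer
variable {V : Type*} [Fintype V] {src tgt : ℕ → V} {m i : ℕ} {S : Finset V} {v : V}
  {E F Y : Finset ℕ}

lemma sReach_union_of_anchor (hPhi : Phi src tgt m S i v E = Phi src tgt m S i v F)
    {a z : V} (ha : a ∈ S ∨ a ∈ front src tgt m i) (hSa : SReach src tgt (F ∪ Y) S a)
    (haz : Reach src tgt E a z) (hz : z = v ∨ z ∈ front src tgt m i) :
    SReach src tgt (F ∪ Y) S z ∨ SReach src tgt (F ∪ Y) S v := by
  have hF : F ⊆ F ∪ Y := subset_union_left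
  by_cases hSEa : SReach src tgt E S a
  · rcases hz with rfl | hz
    · exact .inr ((sReach_target_of_phi_eq hPhi (hSEa.trans haz)).mono hF)
    · exact .inl ((sReach_of_phi_eq hPhi hz (hSEa.trans haz)).mono hF)
  have ha : a ∈ front src tgt m i := ha.resolve_left fun h => hSEa (sReach_of_mem h)
  rcases hz with rfl | hz
  · exact .inr (hSa.trans ((reach_of_phi_eq hPhi ha hSEa (.inl rfl) haz).mono hF))
  by_cases hzv : Reach src tgt E z v
  · exact .inr (hSa.trans ((reach_target_of_phi_eq hPhi ha (haz.trans hzv)).mono hF))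
  · exact .inl (hSa.trans ((reach_of_phi_eq hPhi ha hSEa (.inr ⟨hz, hzv⟩) haz).mono hF))

lemma sReach_union_of_phi_eq (hE : E ⊆ range i) (hY : Y ⊆ range m \ range i)
    (hPhi : Phi src tgt m S i v E = Phi src tgt m S i v F)
    (h : SReach src tgt (E ∪ Y) S v) : SReach src tgt (F ∪ Y) S v := by
  -- `inE z`: the walk is inside an `E`-segment started at an anchor `a` already reached in
  -- `F ∪ Y`; `inY z`: it is inside a `Y`-segment and `z` is already reached in `F ∪ Y`. The
  -- incidence clauses make `z` a frontier vertex whenever the walk switches segment type at `z`.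
  let inE (z : V) : Prop := ∃ a, (a ∈ S ∨ a ∈ front src tgt m i) ∧
    SReach src tgt (F ∪ Y) S a ∧ Reach src tgt E a z ∧
    (z ∈ S ∨ ∃ e ∈ range i, inc src tgt e z)
  let inY (z : V) : Prop := SReach src tgt (F ∪ Y) S z ∧
    (z ∈ S ∨ ∃ e ∈ range m \ range i, inc src tgt e z)
  suffices key : ∀ z, Reach src tgt (E ∪ Y) z v → inE z ∨ inY z → SReach src tgt (F ∪ Y) S v by
    obtain ⟨s, hs, hsv⟩ := h
    exact key s hsv (.inr ⟨sReach_of_mem hs, .inl hs⟩)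
  intro z hz
  induction hz using Relation.ReflTransGen.head_induction_on with
  | refl =>
    rintro (⟨a, ha, hSa, hav, -⟩ | ⟨hv, -⟩)
    · exact (sReach_union_of_anchor hPhi ha hSa hav (.inl rfl)).elim id id
    · exact hv
  | head step _ ih =>
    obtain ⟨e, he, rfl, rfl⟩ := step
    rcases mem_union.1 he with heE | heY
    · have hI : ∃ e' ∈ range i, inc src tgt e' (tgt e) := ⟨e, hE heE, .inr rfl⟩
      rintro (⟨a, ha, hSa, haz, -⟩ | ⟨hSz, hz⟩)
      · exact ih (.inl ⟨a, ha, hSa, haz.tail ⟨e, heE, rfl, rfl⟩, .inr hI⟩)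
      · have hanchor : src e ∈ S ∨ src e ∈ front src tgt m i :=
          hz.imp_right fun hT => mem_front.2 ⟨⟨e, hE heE, .inl rfl⟩, hT⟩
        exact ih (.inl ⟨src e, hanchor, hSz, reach_edge heE, .inr hI⟩)
    · have heT : e ∈ range m \ range i := hY heY
      have hnext (hSz : SReach src tgt (F ∪ Y) S (src e)) : SReach src tgt (F ∪ Y) S v :=
        ih (.inr ⟨hSz.trans (reach_edge (mem_union_right _ heY)), .inr ⟨e, heT, .inr rfl⟩⟩)
      rintro (⟨a, ha, hSa, haz, hzS | hzI⟩ | ⟨hSz, -⟩)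
      · exact hnext (sReach_of_mem hzS)
      · have hz : src e ∈ front src tgt m i := mem_front.2 ⟨hzI, e, heT, .inl rfl⟩
        exact (sReach_union_of_anchor hPhi ha hSa haz (.inr hz)).elim hnext id
      · exact hnext hSz

end Transfer

def subsetWeight (p : ℕ → ℝ) (U X : Finset ℕ) : ℝ :=
  (∏ e ∈ X, p e) * ∏ e ∈ U \ X, (1 - p e)

section SubsetWeight
variable {p : ℕ → ℝ} {I T A Y : Finset ℕ}

lemma sum_powerset_subsetWeight :
    ∑ Y ∈ T.powerset, subsetWeight p T Y = 1 := by
  simp only [subsetWeight, ← prod_add, add_sub_cancel, prod_const_one]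

lemma subsetWeight_pos (hp : ∀ e ∈ I, 0 < p e ∧ p e < 1) (hA : A ⊆ I) :
    0 < subsetWeight p I A :=
  mul_pos (prod_pos fun e he => (hp e (hA he)).1)
    (prod_pos fun e he => sub_pos.2 (hp e (mem_sdiff.1 he).1).2)

lemma subsetWeight_union (hIT : Disjoint I T) (hA : A ⊆ I) (hY : Y ⊆ T) :
    subsetWeight p (I ∪ T) (A ∪ Y) = subsetWeight p I A * subsetWeight p T Y := by
  have hAY : Disjoint A Y := hIT.mono hA hY
  have hcompl : (I ∪ T) \ (A ∪ Y) = I \ A ∪ T \ Y := by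
    ext e
    have := disjoint_left.1 hIT
    simp only [mem_union, mem_sdiff]
    grind
  rw [subsetWeight, subsetWeight, subsetWeight, prod_union hAY, hcompl,
    prod_union (hIT.mono sdiff_subset sdiff_subset)]
  ring

lemma sum_powerset_filter_inter_eq (hIT : Disjoint I T) (hA : A ⊆ I) (f : Finset ℕ → ℝ) :
    ∑ X ∈ (I ∪ T).powerset with A ⊆ X ∧ X ∩ (I \ A) = ∅, f X = ∑ Y ∈ T.powerset, f (A ∪ Y) := by
  have himage : {X ∈ (I ∪ T).powerset | A ⊆ X ∧ X ∩ (I \ A) = ∅} = T.powerset.image (A ∪ ·) := by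
    ext X
    simp only [mem_filter, mem_powerset, mem_image]
    constructor
    · rintro ⟨hXIT, hAX, hXA⟩
      refine ⟨X \ I, sdiff_le_iff.2 hXIT, ?_⟩
      ext e
      have := Finset.ext_iff.1 hXA e
      grind
    · rintro ⟨Y, hYT, rfl⟩
      have := disjoint_left.1 hIT
      grind
  rw [himage, sum_image]
  intro Y hY Z hZ hYZ
  have hAY := hIT.mono hA (mem_powerset.1 (mem_coe.1 hY))
  have hAZ := hIT.mono hA (mem_powerset.1 (mem_coe.1 hZ))
  rw [← union_sdiff_cancel_left hAY, ← union_sdiff_cancel_left hAZ]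
  exact congrArg (· \ A) hYZ

lemma prW_eq_subsetWeight (p : ℕ → ℝ) (m : ℕ) (X : Finset ℕ) :
    prW p m X = subsetWeight p (range m) X := rfl

lemma sum_conditioned_eq (hIT : Disjoint I T) (hA : A ⊆ I) (ev : Finset ℕ → Prop) :
    (∑ X ∈ (I ∪ T).powerset,
        if (A ⊆ X ∧ X ∩ (I \ A) = ∅) ∧ ev X then subsetWeight p (I ∪ T) X else 0) =
      subsetWeight p I A * ∑ Y ∈ T.powerset, if ev (A ∪ Y) then subsetWeight p T Y else 0 := by
  rw [← sum_filter, ← filter_filter, sum_filter, sum_powerset_filter_inter_eq hIT hA, mul_sum]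
  refine sum_congr rfl fun Y hY => ?_
  rw [subsetWeight_union hIT hA (mem_powerset.1 hY), mul_ite, mul_zero]

end SubsetWeight

lemma condP_eq_sum {p : ℕ → ℝ} {m i : ℕ} (hp : ∀ e ∈ range m, 0 < p e ∧ p e < 1) (him : i ≤ m)
    {A : Finset ℕ} (hA : A ⊆ range i) (ev : Finset ℕ → Prop) :
    condP p m A (range i \ A) ev =
      ∑ Y ∈ (range m \ range i).powerset,
        if ev (A ∪ Y) then subsetWeight p (range m \ range i) Y else 0 := by
  have hIT : Disjoint (range i) (range m \ range i) := disjoint_sdiff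
  have hm : range i ∪ (range m \ range i) = range m :=
    union_sdiff_of_subset (range_subset_range.2 him)
  have hnum := sum_conditioned_eq (p := p) hIT hA ev
  have hden := sum_conditioned_eq (p := p) hIT hA fun _ => True
  simp only [and_true, if_true, sum_powerset_subsetWeight, mul_one] at hden
  rw [hm] at hnum hden
  simp only [and_assoc] at hnum
  simp only [condP, prW_eq_subsetWeight]
  have hpos := subsetWeight_pos (fun e he => hp e (range_subset_range.2 him he)) hA
  rw [hnum, hden, mul_div_cancel_left₀ _ hpos.ne']

/-- Conditional-probability well-definedness: equal transversal configurations yield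
equal conditional reachability probabilities. -/
theorem stmt14 {V : Type*} [Fintype V] (src tgt : ℕ → V) (p : ℕ → ℝ) (m : ℕ)
    (hp : ∀ e ∈ Finset.range m, 0 < p e ∧ p e < 1)
    (S : Finset V) (i : ℕ) (him : i ≤ m) (v : V) (E' F' : Finset ℕ)
    (hE' : E' ⊆ Finset.range i) (hF' : F' ⊆ Finset.range i)
    (hPhi : Phi src tgt m S i v E' = Phi src tgt m S i v F') :
    condP p m E' (Finset.range i \ E') (fun X => SReach src tgt X S v)
      = condP p m F' (Finset.range i \ F') (fun X => SReach src tgt X S v) := by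
  rw [condP_eq_sum hp him hE', condP_eq_sum hp him hF']
  refine sum_congr rfl fun Y hY => if_congr ?_ rfl rfl
  exact ⟨sReach_union_of_phi_eq hE' (mem_powerset.1 hY) hPhi,
    sReach_union_of_phi_eq hF' (mem_powerset.1 hY) hPhi.symm⟩

end
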